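/- arXiv:1003.1596 — 2 statements merged into one kernel-verified Lean document; each statement's English description precedes it below -/
import Mathlib

section
/- Let I, J be disjoint intervals with |I| ≤ |J| and dist(I, ∂J) ≥ |J|^{3/4}·|I|^{1/4} (where ∂J denotes the endpoints of J). Let f_I ∈ L²(μ) be supported on I with ∫ f_I dμ = 0 and g_J ∈ L²(ν) supported on J. Then |∬ f_I(t) g_J(s)/(t-s) dμ(t) dν(s)| ≤ A·(|I|^{1/2}|J|^{1/2}/(dist(I,J)+|I|+|J|)²)·μ(I)^{1/2}·ν(J)^{1/2}·‖f_I‖_{L²(μ)}·‖g_J‖_{L²(ν)}. -/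
/-!
Since `f` has mean zero, the interaction equals `∫ f(t) (h(t) - h(a)) dμ(t)` with
`h(t) = ∫ g(s)/(t-s) dν(s)`. Every `t ∈ I` and `s ∈ J` are at distance at least
`m = max(|J|^{3/4}|I|^{1/4}, dist(I,J))`, so `|h(t) - h(a)| ≤ |I|/m² · ‖g‖_{L¹(ν)}`, and
Cauchy–Schwarz turns the `L¹` norms into `L²` norms. Finally `|I|/m²` is at most
`9 |I|^{1/2}|J|^{1/2}/(dist(I,J)+|I|+|J|)²`: compare with `|J|^{3/2}|I|^{1/2}` when
`dist(I,J) ≤ |J|` and with `dist(I,J)²` otherwise.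
-/

open MeasureTheory Set

/-- Distance between two sets of reals. -/
noncomputable def setDist (s t : Set ℝ) : ℝ := sInf (Set.image2 dist s t)

lemma setDist_nonneg (s t : Set ℝ) : 0 ≤ setDist s t :=
  Real.sInf_nonneg (by rintro _ ⟨x, -, y, -, rfl⟩; exact dist_nonneg)

lemma setDist_le_dist {s t : Set ℝ} {x y : ℝ} (hx : x ∈ s) (hy : y ∈ t) :
    setDist s t ≤ dist x y :=
  csInf_le ⟨0, by rintro _ ⟨x, -, y, -, rfl⟩; exact dist_nonneg⟩ (mem_image2_of_mem hx hy)

/-- The endpoint of `J` facing `t` lies between `t` and `s`. -/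
lemma le_abs_sub_of_le_infDist_endpoints {a b c d δ t s : ℝ}
    (hdisj : Disjoint (Icc a b) (Icc c d))
    (hc : δ ≤ Metric.infDist c (Icc a b)) (hd : δ ≤ Metric.infDist d (Icc a b))
    (ht : t ∈ Icc a b) (hs : s ∈ Icc c d) : δ ≤ |t - s| := by
  have ht_notin : t ∉ Icc c d := disjoint_left.mp hdisj ht
  rcases le_total t s with hts | hst
  · have hct : t < c := by
      by_contra! h
      exact ht_notin ⟨h, hts.trans hs.2⟩
    calc δ ≤ dist c t := hc.trans (Metric.infDist_le_dist_of_mem ht)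
      _ = c - t := by rw [Real.dist_eq, abs_of_pos (by linarith)]
      _ ≤ |t - s| := by rw [abs_of_nonpos (by linarith)]; linarith [hs.1]
  · have hdt : d < t := by
      by_contra! h
      exact ht_notin ⟨hs.1.trans hst, h⟩
    calc δ ≤ dist d t := hd.trans (Metric.infDist_le_dist_of_mem ht)
      _ = t - d := by rw [Real.dist_eq, abs_of_neg (by linarith)]; ring
      _ ≤ |t - s| := by rw [abs_of_nonneg (by linarith)]; linarith [hs.2]

lemma div_sq_max_le {x y r δ : ℝ} (hx : 0 < x) (hxy : x ≤ y) (hr : 0 ≤ r) (hδ : 0 ≤ δ)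
    (hδ4 : y ^ 3 * x ≤ δ ^ 4) :
    x / max δ r ^ 2 ≤ 9 * (Real.sqrt x * Real.sqrt y / (r + x + y) ^ 2) := by
  set m := max δ r
  have hy : 0 < y := hx.trans_le hxy
  have hm : 0 < m := by
    refine lt_max_of_lt_left (lt_of_le_of_ne hδ ?_)
    rintro rfl
    rw [zero_pow four_ne_zero] at hδ4
    linarith [show 0 < y ^ 3 * x by positivity]
  have hsqrt : (Real.sqrt x * Real.sqrt y) ^ 2 = x * y := by
    rw [mul_pow, Real.sq_sqrt hx.le, Real.sq_sqrt hy.le]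
  have hmax : x * max r y ^ 2 ≤ Real.sqrt x * Real.sqrt y * m ^ 2 := by
    rcases le_total r y with hry | hyr
    · rw [max_eq_right hry]
      have hδ_sq : x * y ^ 2 ≤ Real.sqrt x * Real.sqrt y * δ ^ 2 := by
        refine (pow_le_pow_iff_left₀ (by positivity) (by positivity) two_ne_zero).mp ?_
        calc (x * y ^ 2) ^ 2 = x * y * (y ^ 3 * x) := by ring
          _ ≤ x * y * δ ^ 4 := by gcongr
          _ = (Real.sqrt x * Real.sqrt y * δ ^ 2) ^ 2 := by rw [mul_pow, hsqrt]; ring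
      calc x * y ^ 2 ≤ Real.sqrt x * Real.sqrt y * δ ^ 2 := hδ_sq
        _ ≤ Real.sqrt x * Real.sqrt y * m ^ 2 := by gcongr; exact le_max_left δ r
    · rw [max_eq_left hyr]
      have hx_le : x ≤ Real.sqrt x * Real.sqrt y := by
        calc x = Real.sqrt x * Real.sqrt x := (Real.mul_self_sqrt hx.le).symm
          _ ≤ Real.sqrt x * Real.sqrt y := by gcongr
      calc x * r ^ 2 ≤ Real.sqrt x * Real.sqrt y * r ^ 2 := by gcongr
        _ ≤ Real.sqrt x * Real.sqrt y * m ^ 2 := by gcongr; exact le_max_right δ r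
  have hsum : (r + x + y) ^ 2 ≤ 9 * max r y ^ 2 := by
    have : r + x + y ≤ 3 * max r y := by linarith [le_max_left r y, le_max_right r y]
    nlinarith
  rw [mul_div_assoc', div_le_div_iff₀ (by positivity) (by positivity)]
  nlinarith

lemma integral_abs_le_sqrt_measure_univ_mul_sqrt_integral_sq {α : Type*} [MeasurableSpace α]
    {μ : Measure α} [IsFiniteMeasure μ] {f : α → ℝ} (hf : MemLp f 2 μ) :
    ∫ t, |f t| ∂μ ≤ Real.sqrt (μ univ).toReal * Real.sqrt (∫ t, f t ^ 2 ∂μ) := by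
  have hf_abs : MemLp (fun t => |f t|) (ENNReal.ofReal 2) μ := by
    simpa [Real.norm_eq_abs] using hf.norm
  have holder := integral_mul_le_Lp_mul_Lq_of_nonneg Real.HolderConjugate.two_two
    (Filter.Eventually.of_forall fun t => abs_nonneg (f t))
    (Filter.Eventually.of_forall fun _ => zero_le_one) hf_abs (memLp_const (1 : ℝ))
  simp only [mul_one, Real.rpow_two, sq_abs, one_pow, integral_const, smul_eq_mul,
    Measure.real, ← Real.sqrt_eq_rpow] at holder
  exact holder.trans_eq (mul_comm _ _)

/-- Subtracting the constant `c` from `h` costs nothing against a mean-zero `f`. -/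
lemma abs_integral_mul_le_of_integral_eq_zero {α : Type*} [MeasurableSpace α] {μ : Measure α}
    {f h : α → ℝ} {c K : ℝ} (hf : Integrable f μ) (hf₀ : ∫ x, f x ∂μ = 0)
    (hh : ∀ᵐ x ∂μ, |h x - c| ≤ K) :
    |∫ x, f x * h x ∂μ| ≤ K * ∫ x, |f x| ∂μ := by
  have hshift : ∫ x, f x * h x ∂μ = ∫ x, f x * (h x - c) ∂μ := by
    have hfc : Integrable (fun x => f x * c) μ := hf.mul_const c
    by_cases hfh : Integrable (fun x => f x * h x) μ
    · simp only [mul_sub, integral_sub hfh hfc, integral_mul_const, hf₀, zero_mul, sub_zero]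
    · have hfh' : ¬Integrable (fun x => f x * (h x - c)) μ := fun h' =>
        hfh ((h'.add hfc).congr (.of_forall fun x => by simp only [Pi.add_apply]; ring))
      rw [integral_undef hfh, integral_undef hfh']
  rw [hshift, ← integral_const_mul, ← Real.norm_eq_abs]
  refine norm_integral_le_of_norm_le (hf.abs.const_mul K) ?_
  filter_upwards [hh] with x hx
  rw [Real.norm_eq_abs, abs_mul, mul_comm K]
  exact mul_le_mul_of_nonneg_left hx (abs_nonneg _)

lemma abs_div_sub_sub_div_sub_le {u t t' s m : ℝ} (hm : 0 < m) (ht : m ≤ |t - s|)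
    (ht' : m ≤ |t' - s|) : |u / (t - s) - u / (t' - s)| ≤ |t - t'| / m ^ 2 * |u| := by
  have hts : t - s ≠ 0 := abs_pos.mp (hm.trans_le ht)
  have hts' : t' - s ≠ 0 := abs_pos.mp (hm.trans_le ht')
  have hdiff : u / (t - s) - u / (t' - s) = (t' - t) / ((t - s) * (t' - s)) * u := by
    field_simp
    ring
  rw [hdiff, abs_mul, abs_div, abs_mul, abs_sub_comm t' t]
  gcongr
  rw [sq]
  exact mul_le_mul ht ht' hm.le (abs_nonneg _)

lemma integrable_div_sub {ν : Measure ℝ} {g : ℝ → ℝ} {t m : ℝ} (hm : 0 < m)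
    (hg : Integrable g ν) (hsep : ∀ᵐ s ∂ν, m ≤ |t - s|) :
    Integrable (fun s => g s / (t - s)) ν := by
  refine (hg.abs.mul_const m⁻¹).mono' ?_ ?_
  · exact hg.aestronglyMeasurable.div₀ (measurable_const.sub measurable_id).aestronglyMeasurable
  · filter_upwards [hsep] with s hs
    rw [Real.norm_eq_abs, abs_div, div_eq_mul_inv]
    gcongr

lemma abs_integral_div_sub_sub_le {ν : Measure ℝ} {g : ℝ → ℝ} {t t' m : ℝ} (hm : 0 < m)
    (hg : Integrable g ν) (ht : ∀ᵐ s ∂ν, m ≤ |t - s|) (ht' : ∀ᵐ s ∂ν, m ≤ |t' - s|) :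
    |∫ s, g s / (t - s) ∂ν - ∫ s, g s / (t' - s) ∂ν| ≤ |t - t'| / m ^ 2 * ∫ s, |g s| ∂ν := by
  rw [← integral_sub (integrable_div_sub hm hg ht) (integrable_div_sub hm hg ht'),
    ← integral_const_mul, ← Real.norm_eq_abs]
  refine norm_integral_le_of_norm_le (hg.abs.const_mul _) ?_
  filter_upwards [ht, ht'] with s hs hs'
  exact abs_div_sub_sub_div_sub_le hm hs hs'

lemma abs_integral_integral_mul_div_sub_le {μ ν : Measure ℝ} {f g : ℝ → ℝ} {t₀ L m : ℝ}
    (hm : 0 < m) (hf : Integrable f μ) (hf₀ : ∫ t, f t ∂μ = 0) (hg : Integrable g ν)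
    (hsep : ∀ᵐ t ∂μ, |t - t₀| ≤ L ∧ ∀ᵐ s ∂ν, m ≤ |t - s|) (hsep₀ : ∀ᵐ s ∂ν, m ≤ |t₀ - s|) :
    |∫ t, ∫ s, f t * g s / (t - s) ∂ν ∂μ| ≤
      L / m ^ 2 * (∫ s, |g s| ∂ν) * ∫ t, |f t| ∂μ := by
  simp_rw [mul_div_assoc, integral_const_mul]
  refine abs_integral_mul_le_of_integral_eq_zero (c := ∫ s, g s / (t₀ - s) ∂ν) hf hf₀ ?_
  filter_upwards [hsep] with t ⟨htL, hts⟩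
  exact (abs_integral_div_sub_sub_le hm hg hts hsep₀).trans (by gcongr)

/-- Interaction estimate for disjoint intervals I = [a,b], J = [c,d] with |I| ≤ |J| and
dist(I, ∂J) ≥ |J|^{3/4}|I|^{1/4}: if f is supported on I with μ-mean zero and g is
supported on J, then |∬ f(t)g(s)/(t-s) dμ(t)dν(s)| ≤
A · |I|^{1/2}|J|^{1/2}/(dist(I,J)+|I|+|J|)² · μ(I)^{1/2} ν(J)^{1/2} ‖f‖_{L²(μ)} ‖g‖_{L²(ν)}. -/
theorem separated_interaction :
    ∃ A : ℝ, 0 < A ∧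
    ∀ (μ ν : Measure ℝ) (a b c d : ℝ) (f g : ℝ → ℝ),
      a < b → c < d →
      b - a ≤ d - c →
      Disjoint (Set.Icc a b) (Set.Icc c d) →
      ((d - c) ^ ((3:ℝ)/4)) * ((b - a) ^ ((1:ℝ)/4)) ≤
        Metric.infDist c (Set.Icc a b) →
      ((d - c) ^ ((3:ℝ)/4)) * ((b - a) ^ ((1:ℝ)/4)) ≤
        Metric.infDist d (Set.Icc a b) →
      μ (Set.Icc a b) < ⊤ → ν (Set.Icc c d) < ⊤ →
      (∀ t ∉ Set.Icc a b, f t = 0) → (∀ s ∉ Set.Icc c d, g s = 0) →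
      MemLp f 2 μ → MemLp g 2 ν →
      (∫ t in Set.Icc a b, f t ∂μ) = 0 →
      |∫ t in Set.Icc a b, (∫ s in Set.Icc c d, f t * g s / (t - s) ∂ν) ∂μ| ≤
        A * (Real.sqrt (b - a) * Real.sqrt (d - c) /
              (setDist (Set.Icc a b) (Set.Icc c d) + (b - a) + (d - c)) ^ 2) *
          Real.sqrt (μ (Set.Icc a b)).toReal * Real.sqrt (ν (Set.Icc c d)).toReal *
          Real.sqrt (∫ t in Set.Icc a b, (f t) ^ 2 ∂μ) *
          Real.sqrt (∫ s in Set.Icc c d, (g s) ^ 2 ∂ν) := by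
  refine ⟨9, by norm_num, ?_⟩
  intro μ ν a b c d f g hab hcd hlen hdisj hcI hdI hμ hν _ _ hf hg hf₀
  set δ := (d - c) ^ ((3:ℝ)/4) * (b - a) ^ ((1:ℝ)/4) with hδ
  set ρ := setDist (Icc a b) (Icc c d)
  have hδ4 : δ ^ 4 = (d - c) ^ 3 * (b - a) := by
    rw [hδ, mul_pow, ← Real.rpow_mul_natCast (by linarith), ← Real.rpow_mul_natCast (by linarith)]
    norm_num
  have hsep : ∀ t ∈ Icc a b, ∀ s ∈ Icc c d, max δ ρ ≤ |t - s| := fun t ht s hs =>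
    max_le (le_abs_sub_of_le_infDist_endpoints hdisj hcI hdI ht hs)
      ((setDist_le_dist ht hs).trans_eq (Real.dist_eq t s))
  have hm : 0 < max δ ρ := lt_max_of_lt_left (by positivity)
  have : IsFiniteMeasure (μ.restrict (Icc a b)) := ⟨by rwa [Measure.restrict_apply_univ]⟩
  have : IsFiniteMeasure (ν.restrict (Icc c d)) := ⟨by rwa [Measure.restrict_apply_univ]⟩
  have hcore := abs_integral_integral_mul_div_sub_le (t₀ := a) (L := b - a) hm
    ((hf.restrict _).integrable one_le_two) hf₀ ((hg.restrict _).integrable one_le_two)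
    (by
      filter_upwards [ae_restrict_mem measurableSet_Icc] with t ht
      refine ⟨by rw [abs_of_nonneg (by linarith [ht.1])]; linarith [ht.2], ?_⟩
      filter_upwards [ae_restrict_mem measurableSet_Icc] with s hs using hsep t ht s hs)
    (by
      filter_upwards [ae_restrict_mem measurableSet_Icc] with s hs
      using hsep a ⟨le_rfl, hab.le⟩ s hs)
  have hCSf := integral_abs_le_sqrt_measure_univ_mul_sqrt_integral_sq (hf.restrict (Icc a b))
  have hCSg := integral_abs_le_sqrt_measure_univ_mul_sqrt_integral_sq (hg.restrict (Icc c d))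
  rw [Measure.restrict_apply_univ] at hCSf hCSg
  have harith :=
    div_sq_max_le (r := ρ) (by linarith) hlen (setDist_nonneg _ _) (by positivity) hδ4.ge
  calc _ ≤ _ := hcore
    _ ≤ 9 * (Real.sqrt (b - a) * Real.sqrt (d - c) / (ρ + (b - a) + (d - c)) ^ 2) *
          (Real.sqrt (ν (Icc c d)).toReal * Real.sqrt (∫ s in Icc c d, g s ^ 2 ∂ν)) *
          (Real.sqrt (μ (Icc a b)).toReal * Real.sqrt (∫ t in Icc a b, f t ^ 2 ∂μ)) := by
      gcongr
    _ = _ := by ring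
end

section
/- Stopping-term single estimate: Let μ, ν be positive measures, let Î ⊇ I be intervals, let I_i be a half of I, c the center of I_i, and let J ⊂ I_i be an interval with |J| ≤ |I| and dist(J, e(I)) ≥ |I|^{3/4}|J|^{1/4} (e(I) = endpoints and midpoint of I). Let g_J ∈ L²(ν) be supported on J with ∫ g_J dν = 0. Then |∫_{Î∖I_i} ∫_J g_J(s)/(t-s) dν(s) dμ(t)| ≤ A·ν(J)^{1/2}·‖g_J‖_{L²(ν)}·(|J|/|I|)^{1/2}·P_{I_i}(χ_{Î∖I_i} dμ), where P_{I_i}(dσ) := (1/π)∫ |I_i|/(|I_i|² + (c - t)²) dσ(t) and A is an absolute constant. -/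
/-!
Since `g` has `ν`-mean zero on `J = [c, d]`, the Hilbert kernel `1/(t - s)` may be replaced by
`1/(t - s) - 1/(t - c)`, which is at most `|J| / X²` when every point of `J` lies at distance
`≥ X` from `t`. For `t ∉ I_i` one can take `X = max(|I|^{3/4}|J|^{1/4}, |t - c_i| - |I_i|/2)`:
the separation from the endpoints of `I_i` handles `t` close to `I_i` and the second term `t` far
from it, and together they give `|J| / X² ≤ 8 (|J|/|I|)^{1/2} · |I_i| / (|I_i|² + (c_i - t)²)`.
Cauchy–Schwarz bounds `∫_J |g| dν` by `ν(J)^{1/2} ‖g‖_{L²(ν)}`, and integrating the resulting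
pointwise bound over `Î ∖ I_i` gives the estimate with `A = 8π`.
-/

open MeasureTheory Set Real

/-- `π⁻¹ * poissonWeight h x₀ t` is the Poisson kernel of the upper half-plane at `x₀ + i h`, so
`P_{I_i}(σ) = π⁻¹ ∫ poissonWeight |I_i| c_i dσ`. -/
noncomputable def poissonWeight (h x₀ t : ℝ) : ℝ := h / (h ^ 2 + (x₀ - t) ^ 2)

lemma poissonWeight_nonneg {h : ℝ} (hh : 0 ≤ h) (x₀ t : ℝ) : 0 ≤ poissonWeight h x₀ t := by
  unfold poissonWeight; positivity

lemma poissonWeight_le {h : ℝ} (hh : 0 < h) (x₀ t : ℝ) : poissonWeight h x₀ t ≤ h⁻¹ := by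
  calc poissonWeight h x₀ t ≤ h / h ^ 2 :=
        div_le_div_of_nonneg_left hh.le (by positivity) (le_add_of_nonneg_right (sq_nonneg _))
    _ = h⁻¹ := by field_simp

lemma integrable_poissonWeight {μ : Measure ℝ} [IsFiniteMeasure μ] {h : ℝ} (hh : 0 < h)
    (x₀ : ℝ) : Integrable (poissonWeight h x₀) μ := by
  have hcont : Continuous (poissonWeight h x₀) :=
    continuous_const.div (by fun_prop) fun t => by positivity
  refine Integrable.of_bound hcont.aestronglyMeasurable h⁻¹ (ae_of_all _ fun t => ?_)
  rw [norm_of_nonneg (poissonWeight_nonneg hh.le x₀ t)]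
  exact poissonWeight_le hh x₀ t

lemma sq_rpow_three_quarters_mul_rpow_quarter {a b : ℝ} (ha : 0 ≤ a) (hb : 0 ≤ b) :
    (a ^ ((3:ℝ)/4) * b ^ ((1:ℝ)/4)) ^ 2 = a * √a * √b := by
  rw [mul_pow, ← rpow_natCast, ← rpow_natCast, ← rpow_mul ha, ← rpow_mul hb, sqrt_eq_rpow,
    sqrt_eq_rpow, ← rpow_one_add' ha (by norm_num)]
  norm_num

lemma integral_abs_le_sqrt_measureReal_mul_sqrt_integral_sq {α : Type*} [MeasurableSpace α]
    {μ : Measure α} [IsFiniteMeasure μ] {g : α → ℝ} (hg : MemLp g 2 μ) :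
    ∫ x, |g x| ∂μ ≤ √(μ.real univ) * √(∫ x, g x ^ 2 ∂μ) := by
  have holder := integral_mul_le_Lp_mul_Lq_of_nonneg HolderConjugate.two_two
    (ae_of_all _ fun x => abs_nonneg (g x)) (ae_of_all _ fun _ => zero_le_one)
    (by rw [ENNReal.ofReal_ofNat]; exact hg.abs) (memLp_const (1 : ℝ))
  have hsq : ∀ x, |g x| ^ (2:ℝ) = g x ^ 2 := fun x => by
    rw [show (2:ℝ) = ((2:ℕ):ℝ) by norm_num, rpow_natCast, sq_abs]
  simp only [mul_one, hsq, one_rpow, integral_const, smul_eq_mul] at holder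
  rw [sqrt_eq_rpow, sqrt_eq_rpow, mul_comm]
  exact holder

lemma div_sq_le_mul_poissonWeight {h L X x₀ t : ℝ} (hL : 0 < L) (hLh : L ≤ 2 * h)
    (hsep : 2 * h * √(2 * h) * √L ≤ X ^ 2) (hfar : |x₀ - t| - h / 2 ≤ X) :
    L / X ^ 2 ≤ 8 * √(L / (2 * h)) * poissonWeight h x₀ t := by
  have hh : 0 < h := by linarith
  obtain ⟨a, ha, rfl⟩ : ∃ a, 0 < a ∧ a ^ 2 = L := ⟨√L, sqrt_pos.2 hL, sq_sqrt hL.le⟩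
  obtain ⟨b, hb, hbh⟩ : ∃ b, 0 < b ∧ b ^ 2 = 2 * h :=
    ⟨√(2 * h), sqrt_pos.2 (by positivity), sq_sqrt (by positivity)⟩
  rw [← hbh, sqrt_sq ha.le, sqrt_sq hb.le] at hsep
  rw [← hbh] at hLh
  have hab : a ≤ b := by nlinarith
  have hX2 : 0 < X ^ 2 := by nlinarith [mul_pos (mul_pos hb hb) (mul_pos hb ha)]
  have hr : (x₀ - t) ^ 2 ≤ 2 * X ^ 2 + h ^ 2 / 2 := by
    nlinarith [sq_abs (x₀ - t), abs_nonneg (x₀ - t), sq_nonneg (X - h / 2)]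
  have hden : 0 < h ^ 2 + (x₀ - t) ^ 2 := by positivity
  have hrhs : 8 * √(a ^ 2 / (2 * h)) * poissonWeight h x₀ t =
      4 * a * b / (h ^ 2 + (x₀ - t) ^ 2) := by
    rw [← hbh, sqrt_div' _ (sq_nonneg b), sqrt_sq ha.le, sqrt_sq hb.le, poissonWeight]
    field_simp
    linear_combination (-4) * hbh
  rw [hrhs, div_le_div_iff₀ hX2 hden]
  have hh2 : h ^ 2 = b ^ 4 / 4 := by nlinarith
  nlinarith [mul_le_mul_of_nonneg_left hsep (mul_pos ha hb).le,
    mul_le_mul_of_nonneg_left hr (sq_nonneg a),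
    mul_le_mul_of_nonneg_right hab (mul_nonneg ha.le hX2.le)]

lemma abs_inv_sub_sub_inv_sub_le {t s c X : ℝ} (hX : 0 < X) (hs : X ≤ |t - s|)
    (hc : X ≤ |t - c|) : |(t - s)⁻¹ - (t - c)⁻¹| ≤ |s - c| / X ^ 2 := by
  have hts : t - s ≠ 0 := abs_pos.1 (hX.trans_le hs)
  have htc : t - c ≠ 0 := abs_pos.1 (hX.trans_le hc)
  rw [inv_sub_inv hts htc, sub_sub_sub_cancel_left, abs_div, abs_mul]
  exact div_le_div_of_nonneg_left (abs_nonneg _) (by positivity)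
    (by rw [sq]; exact mul_le_mul hs hc hX.le (abs_nonneg _))

lemma abs_setIntegral_div_sub_le_of_setIntegral_eq_zero {ν : Measure ℝ} {g : ℝ → ℝ}
    {c d t X : ℝ} (hcd : c ≤ d) (hg : IntegrableOn g (Icc c d) ν)
    (hmean : ∫ s in Icc c d, g s ∂ν = 0) (hX : 0 < X) (hdist : ∀ s ∈ Icc c d, X ≤ |t - s|) :
    |∫ s in Icc c d, g s / (t - s) ∂ν| ≤ (d - c) / X ^ 2 * ∫ s in Icc c d, |g s| ∂ν := by
  have hc : X ≤ |t - c| := hdist c (left_mem_Icc.2 hcd)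
  have hkernel : IntegrableOn (fun s => (t - s)⁻¹ * g s) (Icc c d) ν := by
    refine hg.bdd_mul (c := X⁻¹) (by fun_prop)
      (ae_restrict_of_forall_mem measurableSet_Icc fun s hs => ?_)
    rw [norm_inv, norm_eq_abs]
    exact inv_anti₀ hX (hdist s hs)
  have hcentre : ∫ s in Icc c d, g s / (t - s) ∂ν =
      ∫ s in Icc c d, ((t - s)⁻¹ - (t - c)⁻¹) * g s ∂ν := by
    simp_rw [sub_mul]
    rw [integral_sub hkernel (hg.const_mul _), integral_const_mul, hmean, mul_zero, sub_zero]
    simp_rw [div_eq_inv_mul]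
  rw [hcentre, ← integral_const_mul]
  rw [← norm_eq_abs]
  refine norm_integral_le_of_norm_le (hg.abs.const_mul _)
    (ae_restrict_of_forall_mem measurableSet_Icc fun s hs => ?_)
  rw [norm_mul, norm_eq_abs, norm_eq_abs]
  refine mul_le_mul_of_nonneg_right ?_ (abs_nonneg _)
  refine (abs_inv_sub_sub_inv_sub_le hX (hdist s hs) hc).trans
    (div_le_div_of_nonneg_right ?_ (sq_nonneg _))
  rw [abs_of_nonneg (sub_nonneg.2 hs.1)]
  linarith [hs.2]

lemma le_abs_sub_of_notMem_Icc {a b c d D s t : ℝ} (ht : t ∉ Icc a b) (hs : s ∈ Icc c d)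
    (hleft : D ≤ c - a) (hright : D ≤ b - d) : D ≤ |t - s| := by
  rw [mem_Icc, not_and_or, not_le, not_le] at ht
  rcases ht with ht | ht
  · exact le_abs.2 (Or.inr (by linarith [hs.1]))
  · exact le_abs.2 (Or.inl (by linarith [hs.2]))

lemma abs_midpoint_sub_sub_le {a b s t : ℝ} (hs : s ∈ Icc a b) :
    |(a + b) / 2 - t| - (b - a) / 2 ≤ |t - s| := by
  have hmid : |(a + b) / 2 - s| ≤ (b - a) / 2 := abs_le.2 ⟨by linarith [hs.2], by linarith [hs.1]⟩
  have htri := abs_sub_le ((a + b) / 2) s t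
  rw [abs_sub_comm s t] at htri
  linarith

lemma infDist_Icc_le_sub_left {p c d : ℝ} (hp : p ≤ c) (hcd : c ≤ d) :
    Metric.infDist p (Icc c d) ≤ c - p := by
  simpa [dist_eq, abs_of_nonpos (sub_nonpos.2 hp)] using
    Metric.infDist_le_dist_of_mem (x := p) (left_mem_Icc.2 hcd)

lemma infDist_Icc_le_sub_right {p c d : ℝ} (hp : d ≤ p) (hcd : c ≤ d) :
    Metric.infDist p (Icc c d) ≤ p - d := by
  simpa [dist_eq, abs_of_nonneg (sub_nonneg.2 hp)] using
    Metric.infDist_le_dist_of_mem (x := p) (right_mem_Icc.2 hcd)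

lemma abs_setIntegral_div_sub_le_poissonWeight {ν : Measure ℝ} {g : ℝ → ℝ} {a b c d t : ℝ}
    (hcd : c < d) (hlen : d - c ≤ 2 * (b - a))
    (hleft : (2 * (b - a)) ^ ((3:ℝ)/4) * (d - c) ^ ((1:ℝ)/4) ≤ c - a)
    (hright : (2 * (b - a)) ^ ((3:ℝ)/4) * (d - c) ^ ((1:ℝ)/4) ≤ b - d)
    (hν : ν (Icc c d) < ⊤) (hg : MemLp g 2 (ν.restrict (Icc c d)))
    (hmean : ∫ s in Icc c d, g s ∂ν = 0) (ht : t ∉ Icc a b) :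
    |∫ s in Icc c d, g s / (t - s) ∂ν| ≤
      8 * √((d - c) / (2 * (b - a))) *
        (√(ν (Icc c d)).toReal * √(∫ s in Icc c d, g s ^ 2 ∂ν)) *
        poissonWeight (b - a) ((a + b) / 2) t := by
  set D := (2 * (b - a)) ^ ((3:ℝ)/4) * (d - c) ^ ((1:ℝ)/4)
  have hL : 0 < d - c := sub_pos.2 hcd
  have hI : 0 < 2 * (b - a) := hL.trans_le hlen
  have hD : 0 < D := mul_pos (rpow_pos_of_pos hI _) (rpow_pos_of_pos hL _)
  have hJ : Icc c d ⊆ Icc a b := Icc_subset_Icc (by linarith) (by linarith)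
  set X := max D (|(a + b) / 2 - t| - (b - a) / 2)
  have hdist : ∀ s ∈ Icc c d, X ≤ |t - s| := fun s hs =>
    max_le (le_abs_sub_of_notMem_Icc ht hs hleft hright) (abs_midpoint_sub_sub_le (hJ hs))
  have hweight : (d - c) / X ^ 2 ≤ 8 * √((d - c) / (2 * (b - a))) *
      poissonWeight (b - a) ((a + b) / 2) t := by
    refine div_sq_le_mul_poissonWeight hL hlen ?_ (le_max_right _ _)
    rw [← sq_rpow_three_quarters_mul_rpow_quarter hI.le hL.le]
    exact pow_le_pow_left₀ hD.le (le_max_left _ _) 2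
  have : IsFiniteMeasure (ν.restrict (Icc c d)) := isFiniteMeasure_restrict.2 hν.ne
  have hCS := integral_abs_le_sqrt_measureReal_mul_sqrt_integral_sq hg
  rw [measureReal_restrict_apply_univ, measureReal_def] at hCS
  calc |∫ s in Icc c d, g s / (t - s) ∂ν|
      ≤ (d - c) / X ^ 2 * ∫ s in Icc c d, |g s| ∂ν :=
        abs_setIntegral_div_sub_le_of_setIntegral_eq_zero hcd.le (hg.integrable one_le_two)
          hmean (hD.trans_le (le_max_left _ _)) hdist
    _ ≤ (8 * √((d - c) / (2 * (b - a))) * poissonWeight (b - a) ((a + b) / 2) t) *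
        (√(ν (Icc c d)).toReal * √(∫ s in Icc c d, g s ^ 2 ∂ν)) :=
        mul_le_mul hweight hCS (integral_nonneg fun _ => abs_nonneg _)
          (mul_nonneg (by positivity) (poissonWeight_nonneg (by linarith) _ _))
    _ = _ := by ring

/-- Stopping-term single estimate: Î ⊇ I intervals, I_i = [ai,bi] a half of I = [aI,bI],
J = [c,d] ⊂ I_i with |J| ≤ |I| and dist(J, e(I)) ≥ |I|^{3/4}|J|^{1/4} (e(I) = endpoints
and midpoint of I), and g supported on J with ν-mean zero. Then
|∫_{Î∖I_i} ∫_J g(s)/(t-s) dν(s) dμ(t)| ≤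
A · ν(J)^{1/2} ‖g‖_{L²(ν)} (|J|/|I|)^{1/2} · P_{I_i}(χ_{Î∖I_i} dμ), where P_{I_i} is the
Poisson average adapted to I_i. -/
theorem stopping_term_estimate :
    ∃ A : ℝ, 0 < A ∧
    ∀ (μ ν : Measure ℝ) (Al Bl aI bI ai bi c d : ℝ) (g : ℝ → ℝ),
      Al < Bl → aI < bI → c < d →
      Set.Icc aI bI ⊆ Set.Icc Al Bl →
      ((ai = aI ∧ bi = (aI + bI) / 2) ∨ (ai = (aI + bI) / 2 ∧ bi = bI)) →
      Set.Icc c d ⊆ Set.Icc ai bi →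
      d - c ≤ bI - aI →
      (∀ p ∈ ({aI, (aI + bI) / 2, bI} : Set ℝ),
        (bI - aI) ^ ((3:ℝ)/4) * (d - c) ^ ((1:ℝ)/4) ≤ Metric.infDist p (Set.Icc c d)) →
      μ (Set.Icc Al Bl) < ⊤ → ν (Set.Icc c d) < ⊤ →
      (∀ s ∉ Set.Icc c d, g s = 0) → MemLp g 2 ν →
      (∫ s in Set.Icc c d, g s ∂ν) = 0 →
      |∫ t in Set.Icc Al Bl \ Set.Icc ai bi, (∫ s in Set.Icc c d, g s / (t - s) ∂ν) ∂μ| ≤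
        A * Real.sqrt (ν (Set.Icc c d)).toReal *
          Real.sqrt (∫ s in Set.Icc c d, (g s) ^ 2 ∂ν) *
          Real.sqrt ((d - c) / (bI - aI)) *
          ((1 / Real.pi) * ∫ t in Set.Icc Al Bl \ Set.Icc ai bi,
            (bi - ai) / ((bi - ai) ^ 2 + ((ai + bi) / 2 - t) ^ 2) ∂μ) := by
  refine ⟨8 * π, by positivity, ?_⟩
  intro μ ν Al Bl aI bI ai bi c d g _ _ hcd _ hhalf hJ hlen hsep hμ hν _ hg hmean
  obtain ⟨hwidth, hai, hbi⟩ : bI - aI = 2 * (bi - ai) ∧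
      ai ∈ ({aI, (aI + bI) / 2, bI} : Set ℝ) ∧ bi ∈ ({aI, (aI + bI) / 2, bI} : Set ℝ) := by
    rcases hhalf with ⟨rfl, rfl⟩ | ⟨rfl, rfl⟩ <;> exact ⟨by ring, by simp, by simp⟩
  rw [hwidth] at hlen hsep ⊢
  have hleft :=
    (hsep ai hai).trans (infDist_Icc_le_sub_left (hJ (left_mem_Icc.2 hcd.le)).1 hcd.le)
  have hright :=
    (hsep bi hbi).trans (infDist_Icc_le_sub_right (hJ (right_mem_Icc.2 hcd.le)).2 hcd.le)
  have : IsFiniteMeasure (μ.restrict (Icc Al Bl \ Icc ai bi)) :=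
    isFiniteMeasure_restrict.2 ((measure_mono sdiff_subset).trans_lt hμ).ne
  rw [← norm_eq_abs]
  calc _ ≤ ∫ t in Icc Al Bl \ Icc ai bi, 8 * √((d - c) / (2 * (bi - ai))) *
        (√(ν (Icc c d)).toReal * √(∫ s in Icc c d, g s ^ 2 ∂ν)) *
        poissonWeight (bi - ai) ((ai + bi) / 2) t ∂μ :=
      norm_integral_le_of_norm_le ((integrable_poissonWeight (by linarith) _).const_mul _)
        (ae_restrict_of_forall_mem (measurableSet_Icc.diff measurableSet_Icc) fun t ht =>
          abs_setIntegral_div_sub_le_poissonWeight hcd hlen hleft hright hν (hg.restrict _)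
            hmean ht.2)
    _ = _ := by
      rw [integral_const_mul]
      unfold poissonWeight
      field_simp
end
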